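/- arXiv:1804.09860 — 2 statements merged into one kernel-verified Lean document; each statement's English description precedes it below -/
import Mathlib

section
/- The (2n+1)-star polygonal curve, formed by connecting 2n+1 equally spaced points on a circle where each point is connected to the point n steps ahead, has exactly (n-1)(2n+1) self-intersection points. -/
/-!
Put `θ = π / (2n + 1)`, so that vertex `k` is `exp (2 k θ i)`. A point `z` of the chord `[a, b]`
of the unit circle satisfies `z + a b z̄ = a + b`, and the segments of the star lie on pairwise
distinct such lines, so two of them meet at most once. Up to order, two distinct segments are
`k` and `k + j` with `0 < j ≤ n`. For `j < n` they are mirror images in the ray of angle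
`(2k + n + j) θ` and cross on it, at distance `cos (n θ) / cos (j θ)` from the centre; for `j = n`
they only share an endpoint. The distance from the centre recovers `j` and then the argument
recovers `k`, so the `(2n + 1)(n - 1)` crossings are distinct.
-/

noncomputable def starVertex (n k : ℕ) : ℂ :=
  Complex.exp (2 * Real.pi * Complex.I * k / (2 * n + 1))

open Complex ComplexConjugate
open scoped Real

theorem Complex.mul_mem_openSegment (c : ℂ) {a b z : ℂ} (hz : z ∈ openSegment ℝ a b) :
    c * z ∈ openSegment ℝ (c * a) (c * b) := by
  obtain ⟨s, t, hs, ht, hst, rfl⟩ := hz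
  exact ⟨s, t, hs, ht, hst, by simp only [real_smul]; ring⟩

theorem Complex.add_mul_mul_conj_eq_of_mem_segment {a b z : ℂ} (ha : ‖a‖ = 1) (hb : ‖b‖ = 1)
    (hz : z ∈ segment ℝ a b) : z + a * b * conj z = a + b := by
  obtain ⟨s, t, -, -, hst, rfl⟩ := hz
  have ha' : a * conj a = 1 := by simp [mul_conj', ha]
  have hb' : b * conj b = 1 := by simp [mul_conj', hb]
  have hst' : (s : ℂ) + t = 1 := by exact_mod_cast hst
  simp only [real_smul, map_add, map_mul, conj_ofReal]
  linear_combination (a + b) * hst' + s * b * ha' + t * a * hb'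

theorem Complex.segment_inter_segment_subsingleton {a b c d : ℂ} (ha : ‖a‖ = 1) (hb : ‖b‖ = 1)
    (hc : ‖c‖ = 1) (hd : ‖d‖ = 1) (h : a * b ≠ c * d) :
    (segment ℝ a b ∩ segment ℝ c d).Subsingleton := by
  rintro z ⟨hz₁, hz₂⟩ w ⟨hw₁, hw₂⟩
  have hconj : (a * b - c * d) * (conj z - conj w) = 0 := by
    linear_combination add_mul_mul_conj_eq_of_mem_segment ha hb hz₁
      - add_mul_mul_conj_eq_of_mem_segment hc hd hz₂
      - add_mul_mul_conj_eq_of_mem_segment ha hb hw₁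
      + add_mul_mul_conj_eq_of_mem_segment hc hd hw₂
  exact (RingHom.injective _) (sub_eq_zero.1 ((mul_eq_zero.1 hconj).resolve_left (sub_ne_zero.2 h)))

theorem Complex.ofReal_cos_div_cos_mem_openSegment {γ δ : ℝ} (h₁ : 0 < Real.sin (γ + δ))
    (h₂ : 0 < Real.sin (γ - δ)) :
    ((Real.cos γ / Real.cos δ : ℝ) : ℂ) ∈
      openSegment ℝ (exp (↑(-(γ + δ)) * I)) (exp (↑(γ - δ) * I)) := by
  have hsum : Real.sin (γ + δ) + Real.sin (γ - δ) = 2 * Real.sin γ * Real.cos δ := by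
    rw [Real.sin_add, Real.sin_sub]; ring
  have hS : 0 < Real.sin (γ + δ) + Real.sin (γ - δ) := by positivity
  have hcos : Real.cos δ ≠ 0 := by
    intro hc
    rw [hc] at hsum
    linarith
  refine ⟨Real.sin (γ - δ) / (Real.sin (γ + δ) + Real.sin (γ - δ)),
    Real.sin (γ + δ) / (Real.sin (γ + δ) + Real.sin (γ - δ)),
    by positivity, by positivity, by field_simp; ring, ?_⟩
  apply Complex.ext <;>
  simp only [real_smul, add_re, add_im, mul_re, mul_im, ofReal_re, ofReal_im, exp_ofReal_mul_I_re,
    exp_ofReal_mul_I_im, zero_mul, sub_zero, add_zero, Real.cos_neg, Real.sin_neg]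
  · rw [div_mul_eq_mul_div, div_mul_eq_mul_div, ← add_div, div_eq_div_iff hS.ne' hcos,
      hsum, Real.sin_add, Real.sin_sub, Real.cos_add, Real.cos_sub]
    linear_combination 2 * Real.sin γ * Real.cos γ * Real.cos δ * Real.sin_sq_add_cos_sq δ
  · ring

namespace StarPolygon

open Finset

variable {n : ℕ}

theorem starVertex_eq_pow (n k : ℕ) :
    starVertex n k = exp (2 * π * I / (2 * n + 1 : ℕ)) ^ k := by
  rw [starVertex, ← exp_nat_mul]
  congr 1
  push_cast
  ring

theorem starVertex_eq_exp (n k : ℕ) :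
    starVertex n k = exp (↑(2 * k * (π / (2 * n + 1))) * I) := by
  rw [starVertex]
  congr 1
  push_cast
  ring

theorem norm_starVertex (n k : ℕ) : ‖starVertex n k‖ = 1 := by
  rw [starVertex_eq_exp, norm_exp_ofReal_mul_I]

theorem starVertex_add (n a b : ℕ) : starVertex n (a + b) = starVertex n a * starVertex n b := by
  simp only [starVertex_eq_pow, pow_add]

theorem starVertex_eq_starVertex_iff {a b : ℕ} :
    starVertex n a = starVertex n b ↔ a ≡ b [MOD 2 * n + 1] := by
  have hζ := isPrimitiveRoot_exp (2 * n + 1) (by omega)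
  rw [starVertex_eq_pow, starVertex_eq_pow, (hζ.isOfFinOrder (by omega)).pow_eq_pow_iff_modEq,
    ← hζ.eq_orderOf]

theorem starVertex_mod (n m : ℕ) : starVertex n (m % (2 * n + 1)) = starVertex n m :=
  starVertex_eq_starVertex_iff.2 (Nat.mod_modEq m _)

theorem starVertex_add_ne (m : ℕ) {d : ℕ} (hd₀ : 0 < d) (hd : d < 2 * n + 1) :
    starVertex n (m + d) ≠ starVertex n m := by
  rw [Ne, starVertex_eq_starVertex_iff]
  intro h
  have h' : d ≡ 0 [MOD 2 * n + 1] := Nat.ModEq.add_left_cancel' m h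
  rw [Nat.ModEq, Nat.mod_eq_of_lt hd, Nat.zero_mod] at h'
  omega

def chord (n k : ℕ) : Set ℂ := openSegment ℝ (starVertex n k) (starVertex n (k + n))

theorem chord_congr {a b : ℕ} (h : a ≡ b [MOD 2 * n + 1]) : chord n a = chord n b := by
  rw [chord, chord, starVertex_eq_starVertex_iff.2 h,
    starVertex_eq_starVertex_iff.2 (h.add_right n)]

theorem starVertex_mul_mem_chord (k : ℕ) {m : ℕ} {z : ℂ} (hz : z ∈ chord n m) :
    starVertex n k * z ∈ chord n (k + m) := by
  simpa only [chord, add_assoc, starVertex_add] using mul_mem_openSegment (starVertex n k) hz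

/-- Chords `0` and `j` are mirror images in the ray of angle `(n + j) π / (2n + 1)`; they cross
on it, at distance `cos (n π / (2n + 1)) / cos (j π / (2n + 1))` from the centre. -/
noncomputable def crossing (n j : ℕ) : ℂ :=
  exp (↑((n + j) * (π / (2 * n + 1))) * I) *
    ((Real.cos (n * (π / (2 * n + 1))) / Real.cos (j * (π / (2 * n + 1))) : ℝ) : ℂ)

theorem sin_mul_pi_div_pos {a : ℝ} (h₀ : 0 < a) (h₁ : a < 2 * n + 1) :
    0 < Real.sin (a * (π / (2 * n + 1))) := by
  apply Real.sin_pos_of_pos_of_lt_pi (by positivity)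
  rw [← mul_div_assoc, div_lt_iff₀ (by positivity)]
  nlinarith [Real.pi_pos]

theorem cos_mul_pi_div_pos {a : ℝ} (h₀ : 0 ≤ a) (h₁ : a ≤ n) :
    0 < Real.cos (a * (π / (2 * n + 1))) := by
  have : 0 ≤ a * (π / (2 * n + 1)) := by positivity
  refine Real.cos_pos_of_mem_Ioo ⟨by linarith [Real.pi_pos], ?_⟩
  rw [← mul_div_assoc, div_lt_iff₀ (by positivity)]
  nlinarith [Real.pi_pos]

theorem crossing_mem_chord_zero_inter_chord {j : ℕ} (hj : j < n) :
    crossing n j ∈ chord n 0 ∩ chord n j := by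
  set θ := π / (2 * n + 1) with hθ
  have hj' : (j : ℝ) < n := by exact_mod_cast hj
  have hsin_add : 0 < Real.sin (n * θ + j * θ) := by
    rw [← add_mul]
    exact sin_mul_pi_div_pos (by linarith [j.cast_nonneg (α := ℝ)]) (by linarith)
  have hsin_sub : 0 < Real.sin (n * θ - j * θ) := by
    rw [← sub_mul]
    exact sin_mul_pi_div_pos (by linarith) (by linarith)
  have h₀ := mul_mem_openSegment (exp (↑((n + j) * θ) * I))
    (ofReal_cos_div_cos_mem_openSegment hsin_add hsin_sub)
  have h₁ := mul_mem_openSegment (exp (↑((n + j) * θ) * I))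
    (ofReal_cos_div_cos_mem_openSegment (γ := n * θ) (δ := -(j * θ))
      (by rwa [← sub_eq_add_neg]) (by rwa [sub_neg_eq_add]))
  rw [Real.cos_neg] at h₁
  constructor
  · unfold chord crossing
    convert h₀ using 2 <;>
      rw [starVertex_eq_exp, ← exp_add] <;> congr 1 <;> push_cast [hθ] <;> ring
  · unfold chord crossing
    convert h₁ using 2 <;>
      rw [starVertex_eq_exp, ← exp_add] <;> congr 1 <;> push_cast [hθ] <;> ring

theorem starVertex_mul_crossing_mem (k : ℕ) {j : ℕ} (hj : j < n) :
    starVertex n k * crossing n j ∈ chord n k ∩ chord n (k + j) := by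
  obtain ⟨h₀, h₁⟩ := crossing_mem_chord_zero_inter_chord hj
  exact ⟨by simpa using starVertex_mul_mem_chord k h₀, starVertex_mul_mem_chord k h₁⟩

theorem eq_starVertex_mul_crossing_of_mem_chord_inter {k d : ℕ} {p : ℂ} (hd₀ : 0 < d)
    (hd : d ≤ n) (hp : p ∈ chord n k ∩ chord n (k + d)) :
    d < n ∧ p = starVertex n k * crossing n d := by
  have hlines : starVertex n k * starVertex n (k + n) ≠
      starVertex n (k + d) * starVertex n (k + d + n) := by
    rw [← starVertex_add, ← starVertex_add, show k + d + (k + d + n) = k + (k + n) + 2 * d by ring]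
    exact (starVertex_add_ne _ (by omega) (by omega)).symm
  have hunique := segment_inter_segment_subsingleton (norm_starVertex _ _) (norm_starVertex _ _)
    (norm_starVertex _ _) (norm_starVertex _ _) hlines
  have hsegment : chord n k ∩ chord n (k + d) ⊆ _ :=
    Set.inter_subset_inter (openSegment_subset_segment ..) (openSegment_subset_segment ..)
  rcases hd.lt_or_eq with hd | hd
  · exact ⟨hd, hunique (hsegment hp) (hsegment (starVertex_mul_crossing_mem k hd))⟩
  · subst d
    -- chords `k` and `k + n` share a vertex, which is not a point of the open chord `k + n`
    have hv : p = starVertex n (k + n) :=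
      hunique (hsegment hp) ⟨right_mem_segment _ _ _, left_mem_segment _ _ _⟩
    have hp₂ := hp.2
    rw [hv, chord, left_mem_openSegment_iff] at hp₂
    exact absurd hp₂.symm (starVertex_add_ne _ (by omega) (by omega))

theorem exists_crossing_of_mem_chord_inter {k l : ℕ} {p : ℂ} (hkl : k < l) (hl : l < 2 * n + 1)
    (hp : p ∈ chord n k ∩ chord n l) :
    ∃ q ∈ range (2 * n + 1) ×ˢ Ico 1 n, starVertex n q.1 * crossing n q.2 = p := by
  by_cases hnear : l - k ≤ n
  · rw [← Nat.add_sub_cancel' hkl.le] at hp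
    obtain ⟨hd, rfl⟩ := eq_starVertex_mul_crossing_of_mem_chord_inter (by omega) hnear hp
    exact ⟨(k, l - k), by simp only [mem_product, mem_range, mem_Ico]; omega, rfl⟩
  · have hp' : p ∈ chord n l ∩ chord n (l + (k + (2 * n + 1) - l)) := by
      rwa [show l + (k + (2 * n + 1) - l) = k + (2 * n + 1) by omega,
        chord_congr Nat.add_modEq_right, Set.inter_comm]
    obtain ⟨hd, rfl⟩ := eq_starVertex_mul_crossing_of_mem_chord_inter (by omega) (by omega) hp'
    exact ⟨(l, k + (2 * n + 1) - l), by simp only [mem_product, mem_range, mem_Ico]; omega, rfl⟩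

theorem setOf_mem_chord_inter_chord (n : ℕ) :
    {p : ℂ | ∃ k l, k < 2 * n + 1 ∧ l < 2 * n + 1 ∧ k ≠ l ∧ p ∈ chord n k ∧ p ∈ chord n l} =
      (fun q : ℕ × ℕ => starVertex n q.1 * crossing n q.2) '' ↑(range (2 * n + 1) ×ˢ Ico 1 n) := by
  ext p
  simp only [Set.mem_ofPred_eq, Set.mem_image, mem_coe]
  constructor
  · rintro ⟨k, l, hk, hl, hkl, hpk, hpl⟩
    rcases hkl.lt_or_gt with h | h
    · exact exists_crossing_of_mem_chord_inter h hl ⟨hpk, hpl⟩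
    · exact exists_crossing_of_mem_chord_inter h hk ⟨hpl, hpk⟩
  · rintro ⟨⟨k, j⟩, hq, rfl⟩
    simp only [mem_product, mem_range, mem_Ico] at hq
    obtain ⟨h₁, h₂⟩ := starVertex_mul_crossing_mem k hq.2.2
    refine ⟨k, (k + j) % (2 * n + 1), hq.1, Nat.mod_lt _ (by omega), fun h => ?_, h₁,
      by rwa [chord_congr (Nat.mod_modEq _ _)]⟩
    apply starVertex_add_ne (n := n) k hq.2.1 (by omega)
    rw [← starVertex_mod n (k + j), ← h]

theorem norm_crossing {j : ℕ} (hj : j ≤ n) :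
    ‖crossing n j‖ = Real.cos (n * (π / (2 * n + 1))) / Real.cos (j * (π / (2 * n + 1))) := by
  rw [crossing, norm_mul, norm_exp_ofReal_mul_I, one_mul, norm_real, Real.norm_eq_abs,
    abs_of_pos (div_pos (cos_mul_pi_div_pos (by positivity) le_rfl)
      (cos_mul_pi_div_pos (by positivity) (by exact_mod_cast hj)))]

theorem starVertex_mul_crossing_inj {k k' j j' : ℕ} (hk : k < 2 * n + 1) (hk' : k' < 2 * n + 1)
    (hj : j ≤ n) (hj' : j' ≤ n)
    (h : starVertex n k * crossing n j = starVertex n k' * crossing n j') : k = k' ∧ j = j' := by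
  have hpos {i : ℕ} (hi : i ≤ n) : 0 < Real.cos (i * (π / (2 * n + 1))) :=
    cos_mul_pi_div_pos (by positivity) (by exact_mod_cast hi)
  have hcos : Real.cos (j * (π / (2 * n + 1))) = Real.cos (j' * (π / (2 * n + 1))) := by
    have hnorm := congrArg norm h
    rw [norm_mul, norm_mul, norm_starVertex, norm_starVertex, one_mul, one_mul, norm_crossing hj,
      norm_crossing hj', div_eq_div_iff (hpos hj).ne' (hpos hj').ne'] at hnorm
    exact mul_left_cancel₀ (hpos le_rfl).ne' hnorm.symm
  have hIcc {i : ℕ} (hi : i ≤ n) : i * (π / (2 * n + 1)) ∈ Set.Icc 0 π := by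
    refine ⟨by positivity, ?_⟩
    rw [← mul_div_assoc, div_le_iff₀ (by positivity)]
    have : (i : ℝ) ≤ n := by exact_mod_cast hi
    nlinarith [Real.pi_pos]
  have hjj' : j = j' := by
    have := Real.injOn_cos (hIcc hj) (hIcc hj') hcos
    exact_mod_cast mul_right_cancel₀ (by positivity) this
  subst hjj'
  have hcrossing : crossing n j ≠ 0 := by
    rw [← norm_pos_iff, norm_crossing hj]
    exact div_pos (hpos le_rfl) (hpos hj)
  have hv := mul_right_cancel₀ hcrossing h
  exact ⟨(starVertex_eq_starVertex_iff.1 hv).eq_of_lt_of_lt hk hk', rfl⟩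

end StarPolygon

open StarPolygon Finset in
theorem stmt_4_general (n : ℕ) :
    ({p : ℂ | ∃ k l : ℕ, k < 2 * n + 1 ∧ l < 2 * n + 1 ∧ k ≠ l ∧
        p ∈ openSegment ℝ (starVertex n k) (starVertex n ((k + n) % (2 * n + 1))) ∧
        p ∈ openSegment ℝ (starVertex n l) (starVertex n ((l + n) % (2 * n + 1)))}).ncard
      = (n - 1) * (2 * n + 1) := by
  simp_rw [starVertex_mod]
  change Set.ncard {p : ℂ | ∃ k l, k < 2 * n + 1 ∧ l < 2 * n + 1 ∧ k ≠ l ∧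
    p ∈ chord n k ∧ p ∈ chord n l} = _
  rw [setOf_mem_chord_inter_chord, Set.InjOn.ncard_image, Set.ncard_coe_finset, card_product,
    card_range, Nat.card_Ico, mul_comm]
  rintro ⟨k, j⟩ hq ⟨k', j'⟩ hq' h
  simp only [coe_product, Set.mem_prod, coe_range, Set.mem_Iio, coe_Ico, Set.mem_Ico] at hq hq'
  obtain ⟨rfl, rfl⟩ := starVertex_mul_crossing_inj hq.1 hq'.1 hq.2.2.le hq'.2.2.le h
  rfl

/-- The `(2n+1)`-star, the closed polygonal curve joining vertex `k` to vertex `k + n`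
(mod `2n+1`), has exactly `(n-1)(2n+1)` self-intersection points. -/
theorem stmt_4 (n : ℕ) (hn : 2 ≤ n) :
    ({p : ℂ | ∃ k l : ℕ, k < 2 * n + 1 ∧ l < 2 * n + 1 ∧ k ≠ l ∧
        p ∈ openSegment ℝ (starVertex n k) (starVertex n ((k + n) % (2 * n + 1))) ∧
        p ∈ openSegment ℝ (starVertex n l) (starVertex n ((l + n) % (2 * n + 1)))}).ncard
      = (n - 1) * (2 * n + 1) :=
  stmt_4_general n
end

section
/- Each pair of distinct chords of the (2n+1)-star, i.e., chords joining vertex k to vertex k+n mod (2n+1), intersect in the interior of the disk if and only if their endpoint pairs interleave on the circle; counting such interleaved pairs gives (n-1)(2n+1)/1 crossings, i.e., the number of pairs (i, j), 0 ≤ i < j ≤ 2n, such that the cyclic pairs {i, i+n} and {j, j+n} (mod 2n+1) interleave on Z/(2n+1) equals (n-1)(2n+1). -/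
/-- `x` lies on the (open) cyclic arc from `a` to `b` in `ZMod m`. -/
def arcMem (m : ℕ) (a x b : ZMod m) : Prop :=
  0 < (x - a).val ∧ (x - a).val < (b - a).val

/-- The pairs `{a,b}` and `{c,d}` interleave on the cyclic order `ZMod m`:
exactly one of `c`, `d` lies on the cyclic arc from `a` to `b`. -/
def interleave (m : ℕ) (a b c d : ZMod m) : Prop :=
  Xor' (arcMem m a c b) (arcMem m a d b)

/-!
Put vertex `j` at angle `2πj/(2n+1)`. For points `e^{iα}, e^{iβ}, e^{iγ}` of the unit circle the
signed area `ω (e^{iβ} - e^{iα}) (e^{iγ} - e^{iα})` equals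
`4 sin ((β - α)/2) sin ((γ - α)/2) sin ((γ - β)/2)`, so its sign records the cyclic order of the
three angles. Hence two chords whose endpoints alternate around the circle separate each other's
endpoints and cross. The chords `{k, k+n}` and `{k+d, k+d+n}` alternate unless `d ∈ {n, n+1}`, in
which case they share an endpoint and, three points of a circle never being collinear, meet only
there. The same condition on `d = l - k mod (2n+1)` describes interleaving, and among the
`(2n+1)n` pairs `i < j` exactly `2n+1` have `j - i ∈ {n, n+1}`.
-/

open Complex Real Finset

attribute [local instance] Complex.finrank_real_complex_fact

local notation "ω" => Complex.orientation.areaForm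

lemma div_sub_mem_Ioo_of_mul_neg {a b : ℝ} (h : a * b < 0) : a / (a - b) ∈ Set.Ioo 0 1 := by
  rcases mul_neg_iff.mp h with ⟨ha, hb⟩ | ⟨ha, hb⟩
  · exact ⟨div_pos ha (by linarith), (div_lt_one (by linarith)).mpr (by linarith)⟩
  · exact ⟨div_pos_of_neg_of_neg ha (by linarith),
      (div_lt_one_of_neg (by linarith)).mpr (by linarith)⟩

lemma openSegment_inter_nonempty_of_areaForm_mul_neg {A B C D : ℂ}
    (hAB : ω (B - A) (C - A) * ω (B - A) (D - A) < 0)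
    (hCD : ω (D - C) (A - C) * ω (D - C) (B - C) < 0) :
    (openSegment ℝ A B ∩ openSegment ℝ C D).Nonempty := by
  set a := ω (D - C) (A - C)
  set b := ω (D - C) (B - C)
  set c := ω (B - A) (C - A)
  set d := ω (B - A) (D - A)
  have hab : a - b ≠ 0 := by
    intro h; rw [sub_eq_zero.mp h] at hCD; nlinarith [mul_self_nonneg b]
  have hcd : c - d ≠ 0 := by
    intro h; rw [sub_eq_zero.mp h] at hAB; nlinarith [mul_self_nonneg d]
  -- `a` and `b` are the signed areas of `A` and `B` over `CD`, so the line `CD` cuts `AB` at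
  -- parameter `a / (a - b)`; symmetrically with `c` and `d`.
  have hmeet : A + (a / (a - b)) • (B - A) = C + (c / (c - d)) • (D - C) := by
    apply Complex.ext <;>
    · simp only [Complex.add_re, Complex.add_im, Complex.smul_re, Complex.smul_im,
        Complex.sub_re, Complex.sub_im, smul_eq_mul]
      field_simp
      simp only [a, b, c, d, Complex.areaForm, Complex.mul_im, Complex.conj_re, Complex.conj_im,
        Complex.sub_re, Complex.sub_im]
      ring
  rw [openSegment_eq_image', openSegment_eq_image']
  exact ⟨_, ⟨_, div_sub_mem_Ioo_of_mul_neg hCD, rfl⟩,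
    ⟨_, div_sub_mem_Ioo_of_mul_neg hAB, hmeet.symm⟩⟩

lemma openSegment_inter_openSegment_eq_empty_of_areaForm_ne_zero {A B C : ℂ}
    (h : ω (B - A) (C - A) ≠ 0) : openSegment ℝ A B ∩ openSegment ℝ A C = ∅ := by
  rw [Set.eq_empty_iff_forall_notMem, openSegment_eq_image', openSegment_eq_image']
  rintro _ ⟨⟨t, -, rfl⟩, ⟨s, ⟨hs, -⟩, hst⟩⟩
  have hω := congrArg (fun z => ω (B - A) (z - A)) hst
  simp only [add_sub_cancel_left, map_smul, Orientation.areaForm_apply_self, mul_zero,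
    smul_eq_mul] at hω
  exact h ((mul_eq_zero.mp hω).resolve_left hs.ne')

lemma exp_mul_I_sub_exp_mul_I (α β : ℝ) :
    exp (β * I) - exp (α * I) =
      (2 * Real.sin ((β - α) / 2)) • (I * exp (↑((α + β) / 2) * I)) := by
  apply Complex.ext <;>
  · simp only [Complex.sub_re, Complex.sub_im, Complex.smul_re, Complex.smul_im, Complex.mul_re,
      Complex.mul_im, Complex.I_re, Complex.I_im, exp_ofReal_mul_I_re, exp_ofReal_mul_I_im,
      smul_eq_mul, Real.cos_sub_cos, Real.sin_sub_sin]
    ring_nf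

lemma areaForm_exp_mul_I (φ ψ : ℝ) : ω (exp (φ * I)) (exp (ψ * I)) = Real.sin (ψ - φ) := by
  simp only [Complex.areaForm, Complex.mul_im, Complex.conj_re, Complex.conj_im,
    exp_ofReal_mul_I_re, exp_ofReal_mul_I_im, Real.sin_sub]
  ring

lemma areaForm_exp_mul_I_sub_exp_mul_I (α β γ : ℝ) :
    ω (exp (β * I) - exp (α * I)) (exp (γ * I) - exp (α * I)) =
      4 * Real.sin ((β - α) / 2) * Real.sin ((γ - α) / 2) * Real.sin ((γ - β) / 2) := by
  rw [exp_mul_I_sub_exp_mul_I, exp_mul_I_sub_exp_mul_I]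
  simp only [map_smul, LinearMap.smul_apply, smul_eq_mul, ← Complex.rightAngleRotation,
    Orientation.areaForm_comp_rightAngleRotation, areaForm_exp_mul_I]
  ring_nf

lemma sin_half_sub_pos {x y : ℝ} (hxy : x < y) (hyx : y < x + 2 * π) :
    0 < Real.sin ((y - x) / 2) :=
  Real.sin_pos_of_pos_of_lt_pi (by linarith) (by linarith)

lemma sin_half_sub_neg {x y : ℝ} (hxy : x < y) (hyx : y < x + 2 * π) :
    Real.sin ((x - y) / 2) < 0 := by
  rw [← neg_sub, neg_div, Real.sin_neg, neg_lt_zero]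
  exact sin_half_sub_pos hxy hyx

lemma openSegment_exp_mul_I_inter_nonempty {α β γ δ : ℝ} (hαγ : α < γ) (hγβ : γ < β) (hβδ : β < δ)
    (hδα : δ < α + 2 * π) :
    (openSegment ℝ (exp (α * I)) (exp (β * I)) ∩
      openSegment ℝ (exp (γ * I)) (exp (δ * I))).Nonempty := by
  apply openSegment_inter_nonempty_of_areaForm_mul_neg <;>
    simp only [areaForm_exp_mul_I_sub_exp_mul_I]
  · refine mul_neg_of_neg_of_pos ?_ ?_
    · exact mul_neg_of_pos_of_neg
        (mul_pos (mul_pos four_pos (sin_half_sub_pos (by linarith) (by linarith)))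
          (sin_half_sub_pos hαγ (by linarith)))
        (sin_half_sub_neg hγβ (by linarith))
    · exact mul_pos (mul_pos (mul_pos four_pos (sin_half_sub_pos (by linarith) (by linarith)))
        (sin_half_sub_pos (by linarith) hδα)) (sin_half_sub_pos hβδ (by linarith))
  · refine mul_neg_of_pos_of_neg ?_ ?_
    · exact mul_pos_of_neg_of_neg
        (mul_neg_of_pos_of_neg (mul_pos four_pos (sin_half_sub_pos (by linarith) (by linarith)))
          (sin_half_sub_neg hαγ (by linarith)))
        (sin_half_sub_neg (by linarith) hδα)
    · exact mul_neg_of_pos_of_neg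
        (mul_pos (mul_pos four_pos (sin_half_sub_pos (by linarith) (by linarith)))
          (sin_half_sub_pos hγβ (by linarith)))
        (sin_half_sub_neg hβδ (by linarith))

lemma openSegment_exp_mul_I_inter_eq_empty {α β γ : ℝ} (hαβ : α < β) (hβγ : β < γ)
    (hγα : γ < α + 2 * π) :
    openSegment ℝ (exp (α * I)) (exp (β * I)) ∩ openSegment ℝ (exp (α * I)) (exp (γ * I)) = ∅ := by
  apply openSegment_inter_openSegment_eq_empty_of_areaForm_ne_zero
  rw [areaForm_exp_mul_I_sub_exp_mul_I]
  exact (mul_pos (mul_pos (mul_pos four_pos (sin_half_sub_pos hαβ (by linarith)))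
    (sin_half_sub_pos (by linarith) hγα)) (sin_half_sub_pos hβγ (by linarith))).ne'

noncomputable def starAngle (n j : ℕ) : ℝ := 2 * π * j / (2 * n + 1)

lemma starAngle_strictMono (n : ℕ) : StrictMono (starAngle n) := fun a b hab => by
  unfold starAngle
  gcongr

lemma starAngle_add_mul (n a q : ℕ) :
    starAngle n (a + (2 * n + 1) * q) = starAngle n a + q * (2 * π) := by
  unfold starAngle
  push_cast
  field_simp

lemma starVertex_eq_exp (n j : ℕ) : starVertex n j = exp (↑(starAngle n j) * I) := by
  rw [starVertex, starAngle]; push_cast; ring_nf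

lemma starVertex_add_mul (n a q : ℕ) : starVertex n (a + (2 * n + 1) * q) = starVertex n a := by
  rw [starVertex_eq_exp, starVertex_eq_exp, starAngle_add_mul]
  push_cast
  rw [add_mul, mul_assoc]
  exact exp_periodic.nat_mul q _

lemma starVertex_congr {n a b : ℕ} (h : (a : ZMod (2 * n + 1)) = b) :
    starVertex n a = starVertex n b := by
  rw [ZMod.natCast_eq_natCast_iff'] at h
  rw [← Nat.mod_add_div a (2 * n + 1), ← Nat.mod_add_div b (2 * n + 1), starVertex_add_mul,
    starVertex_add_mul, h]

lemma starVertex_mod (n j : ℕ) : starVertex n (j % (2 * n + 1)) = starVertex n j :=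
  starVertex_congr (ZMod.natCast_mod j _)

lemma starAngle_lt_add_two_pi {n a b : ℕ} (h : b < a + (2 * n + 1)) :
    starAngle n b < starAngle n a + 2 * π := by
  have h' := starAngle_strictMono n (show b < a + (2 * n + 1) * 1 by omega)
  rwa [starAngle_add_mul, Nat.cast_one, one_mul] at h'

lemma starChords_inter_nonempty_iff (n k d : ℕ) (hd : 0 < d) (hdm : d < 2 * n + 1) :
    (openSegment ℝ (starVertex n k) (starVertex n (k + n)) ∩
      openSegment ℝ (starVertex n (k + d)) (starVertex n (k + d + n))).Nonempty ↔
      d ≠ n ∧ d ≠ n + 1 := by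
  have hθ := starAngle_strictMono n
  obtain h | h | h | h : d < n ∨ d = n ∨ d = n + 1 ∨ n + 1 < d := by omega
  · refine iff_of_true ?_ ⟨by omega, by omega⟩
    simp only [starVertex_eq_exp]
    exact openSegment_exp_mul_I_inter_nonempty (hθ (by omega)) (hθ (by omega)) (hθ (by omega))
      (starAngle_lt_add_two_pi (by omega))
  · subst d
    refine iff_of_false ?_ (by omega)
    rw [Set.not_nonempty_iff_eq_empty, openSegment_symm ℝ (starVertex n k),
      ← starVertex_add_mul n k 1, Set.inter_comm]
    simp only [starVertex_eq_exp]
    exact openSegment_exp_mul_I_inter_eq_empty (hθ (by omega)) (hθ (by omega))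
      (starAngle_lt_add_two_pi (by omega))
  · subst d
    refine iff_of_false ?_ (by omega)
    rw [Set.not_nonempty_iff_eq_empty, show k + (n + 1) + n = k + (2 * n + 1) * 1 by ring,
      starVertex_add_mul, openSegment_symm ℝ (starVertex n (k + (n + 1)))]
    simp only [starVertex_eq_exp]
    exact openSegment_exp_mul_I_inter_eq_empty (hθ (by omega)) (hθ (by omega))
      (starAngle_lt_add_two_pi (by omega))
  · refine iff_of_true ?_ ⟨by omega, by omega⟩
    rw [show k + d + n = (k + d - (n + 1)) + (2 * n + 1) * 1 by omega, starVertex_add_mul,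
      openSegment_symm ℝ (starVertex n (k + d))]
    simp only [starVertex_eq_exp]
    exact openSegment_exp_mul_I_inter_nonempty (hθ (by omega)) (hθ (by omega)) (hθ (by omega))
      (starAngle_lt_add_two_pi (by omega))

lemma interleave_star_iff (n : ℕ) (x y : ZMod (2 * n + 1)) :
    interleave (2 * n + 1) x (x + n) y (y + n) ↔
      (y - x).val ≠ 0 ∧ (y - x).val ≠ n ∧ (y - x).val ≠ n + 1 := by
  have hn : (n : ZMod (2 * n + 1)).val = n := ZMod.val_natCast_of_lt (by omega)
  have hv := ZMod.val_lt (y - x)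
  have hvn : (y - x + n).val = ((y - x).val + n) % (2 * n + 1) := by rw [ZMod.val_add, hn]
  refine xor_def.trans ?_
  simp only [arcMem, add_sub_cancel_left, hn, show y + n - x = y - x + n by ring, hvn]
  rcases Nat.lt_or_ge ((y - x).val + n) (2 * n + 1) with h | h
  · rw [Nat.mod_eq_of_lt h]
    omega
  · rw [Nat.mod_eq_sub_mod h, Nat.mod_eq_of_lt (by omega)]
    omega

lemma val_natCast_sub_natCast {m i j : ℕ} (hij : i ≤ j) (hj : j < m) :
    ((j : ZMod m) - i).val = j - i := by
  rw [← Nat.cast_sub hij, ZMod.val_natCast_of_lt (by omega)]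

def pairsAtDistance (m d : ℕ) : Finset (Fin m × Fin m) := {p | p.1.val + d = p.2.val}

lemma card_pairsAtDistance (m d : ℕ) : #(pairsAtDistance m d) = m - d := by
  rw [pairsAtDistance, ← Finset.card_range (m - d)]
  apply Finset.card_bij (fun p _ => p.1.val)
  · intro p hp
    simp only [Finset.mem_filter, Finset.mem_univ, true_and] at hp
    simp only [Finset.mem_range]
    omega
  · intro p hp q hq h
    simp only [Finset.mem_filter, Finset.mem_univ, true_and] at hp hq
    exact Prod.ext (Fin.ext h) (Fin.ext (by omega))
  · intro i hi
    simp only [Finset.mem_range] at hi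
    exact ⟨(⟨i, by omega⟩, ⟨i + d, by omega⟩), by simp, rfl⟩

lemma ncard_interleaving_star_pairs (n : ℕ) (hn : 0 < n) :
    ({p : Fin (2 * n + 1) × Fin (2 * n + 1) | p.1 < p.2 ∧
        interleave (2 * n + 1) (p.1.val : ZMod (2 * n + 1))
          ((p.1.val : ZMod (2 * n + 1)) + n)
          (p.2.val : ZMod (2 * n + 1)) ((p.2.val : ZMod (2 * n + 1)) + n)}).ncard
      = (n - 1) * (2 * n + 1) := by
  set S : Finset (Fin (2 * n + 1) × Fin (2 * n + 1)) :=
    {p | p.1 < p.2 ∧ p.1.val + n ≠ p.2.val ∧ p.1.val + (n + 1) ≠ p.2.val}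
  have hS : {p : Fin (2 * n + 1) × Fin (2 * n + 1) | p.1 < p.2 ∧
        interleave (2 * n + 1) (p.1.val : ZMod (2 * n + 1))
          ((p.1.val : ZMod (2 * n + 1)) + n)
          (p.2.val : ZMod (2 * n + 1)) ((p.2.val : ZMod (2 * n + 1)) + n)} = S := by
    ext p
    simp only [Set.mem_ofPred_eq, S, Finset.coe_filter, Finset.mem_univ, true_and,
      interleave_star_iff, Fin.lt_def]
    refine and_congr_right fun h => ?_
    rw [val_natCast_sub_natCast h.le p.2.isLt]
    omega
  have hdecomp : ({p | p.1 < p.2} : Finset (Fin (2 * n + 1) × Fin (2 * n + 1))) =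
      S ∪ (pairsAtDistance _ n ∪ pairsAtDistance _ (n + 1)) := by
    ext p
    simp only [S, pairsAtDistance, Finset.mem_union, Finset.mem_filter, Finset.mem_univ, true_and,
      Fin.lt_def]
    omega
  have hcard := congrArg Finset.card hdecomp
  rw [Finset.card_union_of_disjoint, Finset.card_union_of_disjoint, card_pairsAtDistance,
    card_pairsAtDistance, Fintype.card_product_filter_lt, Fintype.card_fin,
    Nat.choose_two_right] at hcard
  · rw [hS, Set.ncard_coe_finset]
    rw [show 2 * n + 1 - 1 = 2 * n by omega,
      show (2 * n + 1) * (2 * n) = n * (2 * n + 1) * 2 by ring,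
      Nat.mul_div_cancel _ two_pos] at hcard
    rw [Nat.sub_one_mul]
    omega
  · exact Finset.disjoint_filter.mpr fun p _ h => by omega
  · exact Finset.disjoint_union_right.mpr
      ⟨Finset.disjoint_filter.mpr fun p _ h => by omega,
        Finset.disjoint_filter.mpr fun p _ h => by omega⟩

/-- Two distinct chords of the `(2n+1)`-star, joining vertex `k` to vertex `k+n`
(mod `2n+1`), meet in the interior of the disk iff their endpoint pairs interleave
on the circle; and the number of pairs `(i,j)`, `0 ≤ i < j ≤ 2n`, whose cyclic pairs
`{i, i+n}` and `{j, j+n}` (mod `2n+1`) interleave equals `(n-1)(2n+1)`. -/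
theorem stmt_5 (n : ℕ) (hn : 2 ≤ n) :
    (∀ k l : ℕ, k < 2 * n + 1 → l < 2 * n + 1 → k ≠ l →
      ((openSegment ℝ (starVertex n k) (starVertex n ((k + n) % (2 * n + 1))) ∩
        openSegment ℝ (starVertex n l) (starVertex n ((l + n) % (2 * n + 1)))).Nonempty ↔
        interleave (2 * n + 1) (k : ZMod (2 * n + 1)) ((k : ZMod (2 * n + 1)) + n)
          (l : ZMod (2 * n + 1)) ((l : ZMod (2 * n + 1)) + n))) ∧
    ({p : Fin (2 * n + 1) × Fin (2 * n + 1) | p.1 < p.2 ∧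
        interleave (2 * n + 1) (p.1.val : ZMod (2 * n + 1))
          ((p.1.val : ZMod (2 * n + 1)) + n)
          (p.2.val : ZMod (2 * n + 1)) ((p.2.val : ZMod (2 * n + 1)) + n)}).ncard
      = (n - 1) * (2 * n + 1) := by
  refine ⟨fun k l hk hl hkl => ?_, ncard_interleaving_star_pairs n (by omega)⟩
  set d := ((l : ZMod (2 * n + 1)) - k).val with hd
  have hl_eq : ((k + d : ℕ) : ZMod (2 * n + 1)) = l := by
    rw [Nat.cast_add, hd, ZMod.natCast_zmod_val, add_sub_cancel]
  have hd0 : d ≠ 0 := by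
    rw [hd, ZMod.val_ne_zero, sub_ne_zero]
    intro h
    rw [ZMod.natCast_eq_natCast_iff', Nat.mod_eq_of_lt hk, Nat.mod_eq_of_lt hl] at h
    exact hkl h.symm
  rw [starVertex_mod, starVertex_mod, starVertex_congr (a := l) hl_eq.symm,
    starVertex_congr (a := l + n) (b := k + d + n)
      (by rw [Nat.cast_add (k + d), hl_eq, Nat.cast_add]),
    starChords_inter_nonempty_iff n k d (Nat.pos_of_ne_zero hd0) (ZMod.val_lt _),
    interleave_star_iff]
  exact ⟨fun h => ⟨hd0, h⟩, fun h => h.2⟩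
end
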